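/- arXiv:1804.07546 — 2 statements merged into one kernel-verified Lean document; each statement's English description precedes it below -/
import Mathlib

section
/- Let z ∈ ℂ_p with |z−1|_p ≥ 1, k ≥ 1, and r ≥ 0. Then ∫_{ℤ_p} x^r dμ_{k,z} = k · ∫_{ℤ_p} x^{r+k−1} dμ_{1,z}, and the same identity holds with ℤ_p replaced by ℤ_p^*. -/
/-- The twisted Bernoulli polynomial `β_k(x,y)`, defined (for `y ≠ 1`) by the
exponential generating function `t·e^{xt}/(y·e^t − 1) = Σ_{k≥0} β_k(x,y) t^k/k!`. -/
noncomputable def twistedBernoulli {K : Type*} [Field K] [CharZero K] (k : ℕ) (x y : K) : K :=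
  (k.factorial : K) *
    PowerSeries.coeff (R := K) k
      (PowerSeries.X * PowerSeries.rescale x (PowerSeries.exp K) *
        (PowerSeries.C (R := K) y * PowerSeries.exp K - 1)⁻¹)

open Filter

/-!
Write `P = p^N` and `y = z^{p^N}`. The Appell expansion
`β_k(x, y) = Σ_i C(k,i) β_i(0,y) x^{k-i}` and `β_0 = 0` give
`μ_k(a + Pℤ_p) = z^a Σ_{i ≥ 1} C(k,i) β_i(0,y) a^{k-i} P^{i-1}`, whose `i = 1` term is
`k a^{k-1} μ_1(a + Pℤ_p)`. Since `|z - 1| ≥ 1` and `|p| < 1`, the binomial expansion gives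
`|z^{p^N} - 1| = |z - 1|^{p^N}`; with the recurrence for `β_i(0,y)` this yields
`|β_i(0,y)| ≤ |y - 1|⁻¹` and `|μ_1(a + Pℤ_p)| ≤ 1`. So the terms with `i ≥ 2` are `O(|p|^N)`
and the two Riemann sums differ by `O(|p|^N)`. The Riemann sums of `μ_1` converge because `μ_1`
is a bounded distribution and both `x^m` and `x^m·1_{ℤ_p^*}` are `1`-Lipschitz `p`-adically.
-/

open PowerSeries Finset Topology

section Algebra

variable {K : Type*} [Field K] [CharZero K]

@[simp]
theorem twistedBernoulli_zero (x y : K) : twistedBernoulli 0 x y = 0 := by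
  simp [twistedBernoulli, coeff_zero_eq_constantCoeff]

theorem twistedBernoulli_eq_sum (k : ℕ) (x y : K) :
    twistedBernoulli k x y =
      ∑ i ∈ range (k + 1), (k.choose i : K) * twistedBernoulli i 0 y * x ^ (k - i) := by
  have hsplit : X * rescale x (exp K) * (C y * exp K - 1)⁻¹ =
      (X * rescale 0 (exp K) * (C y * exp K - 1)⁻¹) * rescale x (exp K) := by
    simp only [rescale_zero, RingHom.coe_comp, Function.comp_apply, constantCoeff_exp, map_one,
      mul_one]
    ring
  rw [twistedBernoulli, hsplit, coeff_mul, Nat.sum_antidiagonal_eq_sum_range_succ_mk, mul_sum]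
  refine sum_congr rfl fun i hi => ?_
  have hik : i ≤ k := Nat.lt_succ_iff.mp (mem_range.mp hi)
  rw [twistedBernoulli, coeff_rescale, coeff_exp, Nat.cast_choose K hik]
  simp only [map_div₀, map_one, map_natCast]
  have : (i.factorial : K) ≠ 0 := by exact_mod_cast i.factorial_ne_zero
  field_simp

theorem mul_twistedBernoulli_one_sub_twistedBernoulli_zero {y : K} (hy : y ≠ 1) (n : ℕ) :
    y * twistedBernoulli n 1 y - twistedBernoulli n 0 y = if n = 1 then 1 else 0 := by
  have hunit : constantCoeff (C y * exp K - 1) ≠ 0 := by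
    simpa [constantCoeff_exp, sub_eq_zero] using hy
  have hdiff : C y * (X * rescale 1 (exp K) * (C y * exp K - 1)⁻¹) -
      X * rescale 0 (exp K) * (C y * exp K - 1)⁻¹ = X := by
    simp only [rescale_zero, rescale_one, RingHom.coe_comp, Function.comp_apply,
      constantCoeff_exp, map_one, mul_one, RingHom.id_apply]
    linear_combination X * PowerSeries.mul_inv_cancel _ hunit
  have hcoeff := congrArg (fun f => (n.factorial : K) * coeff n f) hdiff
  simp only [map_sub, coeff_C_mul, coeff_X] at hcoeff
  rw [twistedBernoulli, twistedBernoulli]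
  split_ifs at hcoeff ⊢ with hn <;> simpa [hn, mul_sub, mul_left_comm] using hcoeff

theorem twistedBernoulli_recurrence {y : K} (hy : y ≠ 1) (n : ℕ) :
    y * ∑ i ∈ range (n + 1), (n.choose i : K) * twistedBernoulli i 0 y -
      twistedBernoulli n 0 y = if n = 1 then 1 else 0 := by
  simpa [twistedBernoulli_eq_sum n (1 : K) y] using
    mul_twistedBernoulli_one_sub_twistedBernoulli_zero hy n

theorem twistedBernoulli_one {y : K} (hy : y ≠ 1) (x : K) :
    twistedBernoulli 1 x y = (y - 1)⁻¹ := by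
  have hrec : y * twistedBernoulli 1 0 y - twistedBernoulli 1 0 y = 1 := by
    simpa [sum_range_succ] using twistedBernoulli_recurrence hy 1
  have hx : twistedBernoulli 1 x y = twistedBernoulli 1 0 y := by
    simp [twistedBernoulli_eq_sum 1 x, sum_range_succ]
  rw [hx]
  exact eq_inv_of_mul_eq_one_left (by linear_combination hrec)

theorem pow_mul_twistedBernoulli_succ_div {P : K} (hP : P ≠ 0) (k : ℕ) (x y : K) :
    P ^ k * twistedBernoulli (k + 1) (x / P) y =
      ∑ i ∈ range (k + 1),
        ((k + 1).choose (i + 1) : K) * twistedBernoulli (i + 1) 0 y * x ^ (k - i) * P ^ i := by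
  rw [twistedBernoulli_eq_sum, sum_range_succ', twistedBernoulli_zero, mul_zero, zero_mul,
    add_zero, mul_sum]
  refine sum_congr rfl fun i hi => ?_
  have hik : i ≤ k := Nat.lt_succ_iff.mp (mem_range.mp hi)
  rw [Nat.add_sub_add_right, div_pow, ← Nat.add_sub_cancel' hik, pow_add, Nat.add_sub_cancel_left]
  field_simp

end Algebra

section Ultrametric

variable {K : Type*} [NormedField K] [IsUltrametricDist K]

theorem norm_le_norm_sub_one {y : K} (hy : 1 ≤ ‖y - 1‖) : ‖y‖ ≤ ‖y - 1‖ := by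
  calc ‖y‖ = ‖(y - 1) + 1‖ := by rw [sub_add_cancel]
    _ ≤ max ‖y - 1‖ ‖(1 : K)‖ := IsUltrametricDist.norm_add_le_max _ _
    _ = ‖y - 1‖ := by rw [norm_one, max_eq_left hy]

theorem norm_intCast_pow_sub_pow_le (a b : ℤ) (m : ℕ) :
    ‖(a : K) ^ m - (b : K) ^ m‖ ≤ ‖(a : K) - b‖ := by
  obtain ⟨c, hc⟩ := sub_dvd_pow_sub_pow a b m
  have hcK : (a : K) ^ m - (b : K) ^ m = ((a : K) - b) * c := by
    exact_mod_cast congrArg (Int.cast : ℤ → K) hc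
  rw [hcK, norm_mul]
  exact mul_le_of_le_one_right (norm_nonneg _) (IsUltrametricDist.norm_intCast_le_one K c)

theorem norm_natCast_pow_sub_pow_le_of_modEq {n a b : ℕ} (h : a ≡ b [MOD n]) (m : ℕ) :
    ‖(a : K) ^ m - (b : K) ^ m‖ ≤ ‖(n : K)‖ := by
  obtain ⟨c, hc⟩ := (Nat.modEq_iff_dvd.mp h.symm)
  have hcK : (a : K) - b = n * c := by exact_mod_cast congrArg (Int.cast : ℤ → K) hc
  calc ‖(a : K) ^ m - (b : K) ^ m‖ ≤ ‖(a : K) - b‖ := by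
        exact_mod_cast norm_intCast_pow_sub_pow_le (K := K) a b m
    _ ≤ ‖(n : K)‖ := by
        rw [hcK, norm_mul]
        exact mul_le_of_le_one_right (norm_nonneg _) (IsUltrametricDist.norm_intCast_le_one K c)

theorem norm_ite_dvd_sub_ite_dvd_le_of_modEq {p N a b : ℕ} (h : a ≡ b [MOD p ^ N]) (m : ℕ) :
    ‖(if p ∣ a then 0 else (a : K) ^ m) - (if p ∣ b then 0 else (b : K) ^ m)‖ ≤ ‖(p : K)‖ ^ N := by
  cases N with
  | zero =>
    have hle : ∀ c : ℕ, ‖(if p ∣ c then 0 else (c : K) ^ m)‖ ≤ 1 := fun c => by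
      split_ifs
      · simp
      · exact_mod_cast IsUltrametricDist.norm_natCast_le_one K (c ^ m)
    rw [sub_eq_add_neg, pow_zero]
    exact (IsUltrametricDist.norm_add_le_max (S := K) _ _).trans
      (max_le (hle a) ((norm_neg _).trans_le (hle b)))
  | succ N =>
    rw [if_congr (h.dvd_iff (dvd_pow_self p N.succ_ne_zero)) rfl rfl]
    split_ifs
    · simp
    · simpa only [Nat.cast_pow, norm_pow] using norm_natCast_pow_sub_pow_le_of_modEq (K := K) h m

section PrimePower

variable {p : ℕ} (hp : p.Prime) (hpK : ‖(p : K)‖ < 1)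
include hp hpK

theorem norm_pow_prime_sub_one {z : K} (hz : 1 ≤ ‖z - 1‖) : ‖z ^ p - 1‖ = ‖z - 1‖ ^ p := by
  set w := z - 1
  have hexp := add_pow_prime_eq' hp w 1
  rw [sub_add_cancel, one_pow] at hexp
  set S := ∑ k ∈ Ioo 0 p, w ^ k * 1 ^ (p - k) * ((p.choose k / p : ℕ) : K)
  have hS : ‖S‖ ≤ ‖w‖ ^ (p - 1) := by
    refine IsUltrametricDist.norm_sum_le_of_forall_le_of_nonneg (by positivity) fun k hk => ?_
    have hkp : k ≤ p - 1 := by have := (mem_Ioo.mp hk).2; omega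
    rw [one_pow, mul_one, norm_mul, norm_pow]
    exact (mul_le_of_le_one_right (by positivity) (IsUltrametricDist.norm_natCast_le_one K _)).trans
      (pow_le_pow_right₀ hz hkp)
  have hlt : ‖(p : K) * S‖ < ‖w ^ p‖ := by
    calc ‖(p : K) * S‖ ≤ ‖(p : K)‖ * ‖w‖ ^ (p - 1) := by
          rw [norm_mul]; exact mul_le_mul_of_nonneg_left hS (norm_nonneg _)
      _ < ‖w‖ * ‖w‖ ^ (p - 1) := by gcongr; linarith
      _ = ‖w ^ p‖ := by rw [norm_pow, ← pow_succ', Nat.sub_add_cancel hp.one_le]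
  calc ‖z ^ p - 1‖ = ‖w ^ p + p * S‖ := by rw [hexp, add_right_comm, add_sub_cancel_right]
    _ = ‖w‖ ^ p := by
      rw [IsUltrametricDist.norm_add_eq_max_of_norm_ne_norm hlt.ne', max_eq_left hlt.le, norm_pow]

theorem norm_pow_prime_pow_sub_one {z : K} (hz : 1 ≤ ‖z - 1‖) (N : ℕ) :
    ‖z ^ p ^ N - 1‖ = ‖z - 1‖ ^ p ^ N := by
  induction N generalizing z with
  | zero => simp
  | succ N ih =>
    have hzp : ‖z ^ p - 1‖ = ‖z - 1‖ ^ p := norm_pow_prime_sub_one hp hpK hz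
    rw [pow_succ', pow_mul, ih (hzp ▸ one_le_pow₀ hz), hzp, ← pow_mul]

theorem one_le_norm_pow_prime_pow_sub_one {z : K} (hz : 1 ≤ ‖z - 1‖) (N : ℕ) :
    1 ≤ ‖z ^ p ^ N - 1‖ := by
  rw [norm_pow_prime_pow_sub_one hp hpK hz]
  exact one_le_pow₀ hz

theorem pow_prime_pow_ne_one {z : K} (hz : 1 ≤ ‖z - 1‖) (N : ℕ) : z ^ p ^ N ≠ 1 := by
  intro h
  have := one_le_norm_pow_prime_pow_sub_one hp hpK hz N
  rw [h, sub_self, norm_zero] at this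
  norm_num at this

theorem norm_pow_le_norm_pow_prime_pow_sub_one {z : K} (hz : 1 ≤ ‖z - 1‖) {N a : ℕ}
    (ha : a ≤ p ^ N) : ‖z ^ a‖ ≤ ‖z ^ p ^ N - 1‖ := by
  rw [norm_pow_prime_pow_sub_one hp hpK hz, norm_pow]
  exact (pow_le_pow_left₀ (norm_nonneg z) (norm_le_norm_sub_one hz) a).trans
    (pow_le_pow_right₀ hz ha)

end PrimePower

section TwistedBernoulli

variable [CharZero K]

theorem norm_twistedBernoulli_zero_le {y : K} (hy : 1 ≤ ‖y - 1‖) (n : ℕ) :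
    ‖twistedBernoulli n 0 y‖ ≤ ‖y - 1‖⁻¹ := by
  have hy0 : 0 < ‖y - 1‖ := one_pos.trans_le hy
  induction n using Nat.strong_induction_on with
  | _ n ih =>
    have hrec := twistedBernoulli_recurrence (sub_ne_zero.mp (norm_pos_iff.mp hy0)) n
    rw [sum_range_succ, Nat.choose_self, Nat.cast_one, one_mul] at hrec
    have hsum : ‖∑ i ∈ range n, (n.choose i : K) * twistedBernoulli i 0 y‖ ≤ ‖y - 1‖⁻¹ :=
      IsUltrametricDist.norm_sum_le_of_forall_le_of_nonneg (by positivity) fun i hi => by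
        rw [norm_mul]
        exact (mul_le_of_le_one_left (norm_nonneg _)
          (IsUltrametricDist.norm_natCast_le_one K _)).trans (ih i (mem_range.mp hi))
    have hmain : ‖(y - 1) * twistedBernoulli n 0 y‖ ≤ 1 := by
      have heq : (y - 1) * twistedBernoulli n 0 y =
          (if n = 1 then 1 else 0) -
            y * ∑ i ∈ range n, (n.choose i : K) * twistedBernoulli i 0 y := by
        rw [← hrec]; ring
      rw [heq, sub_eq_add_neg]
      refine (IsUltrametricDist.norm_add_le_max _ _).trans (max_le (by split_ifs <;> simp) ?_)
      rw [norm_neg, norm_mul]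
      calc ‖y‖ * _ ≤ ‖y - 1‖ * ‖y - 1‖⁻¹ :=
            mul_le_mul (norm_le_norm_sub_one hy) hsum (norm_nonneg _) hy0.le
        _ = 1 := mul_inv_cancel₀ hy0.ne'
    rwa [norm_mul, ← le_div_iff₀' hy0, one_div] at hmain

theorem norm_pow_mul_twistedBernoulli_succ_div_sub_le {P x y : K} (hP : P ≠ 0) (hP1 : ‖P‖ ≤ 1)
    (hx : ‖x‖ ≤ 1) (hy : 1 ≤ ‖y - 1‖) (k : ℕ) :
    ‖P ^ k * twistedBernoulli (k + 1) (x / P) y - (k + 1) * x ^ k * (y - 1)⁻¹‖ ≤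
      ‖P‖ * ‖y - 1‖⁻¹ := by
  have hy1 : y ≠ 1 := sub_ne_zero.mp (norm_pos_iff.mp (one_pos.trans_le hy))
  rw [pow_mul_twistedBernoulli_succ_div hP, sum_range_succ', twistedBernoulli_one hy1]
  simp only [zero_add, Nat.choose_one_right, Nat.cast_add, Nat.cast_one, Nat.sub_zero, pow_zero,
    mul_one]
  rw [mul_right_comm ((k : K) + 1) (y - 1)⁻¹, add_sub_cancel_right]
  refine IsUltrametricDist.norm_sum_le_of_forall_le_of_nonneg (by positivity) fun i _ => ?_
  rw [norm_mul, norm_mul, norm_mul, norm_pow, norm_pow, pow_succ]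
  calc _ ≤ 1 * ‖y - 1‖⁻¹ * 1 * (1 * ‖P‖) := by
        gcongr
        · exact IsUltrametricDist.norm_natCast_le_one K _
        · exact norm_twistedBernoulli_zero_le hy _
        · exact pow_le_one₀ (norm_nonneg _) hx
        · exact pow_le_one₀ (norm_nonneg _) hP1
    _ = ‖P‖ * ‖y - 1‖⁻¹ := by ring

end TwistedBernoulli

end Ultrametric

theorem Finset.sum_range_mul_eq_sum_sum {M : Type*} [AddCommMonoid M] (m n : ℕ) (f : ℕ → M) :
    ∑ a ∈ range (m * n), f a = ∑ j ∈ range n, ∑ b ∈ range m, f (m * j + b) := by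
  induction n with
  | zero => simp
  | succ n ih => rw [Nat.mul_succ, sum_range_add, ih, sum_range_succ]

section Distribution

variable {K : Type*} [NormedField K] [IsUltrametricDist K] {p : ℕ}

theorem cauchySeq_sum_mul_of_distribution (hpK : ‖(p : K)‖ < 1) {μ : ℕ → ℕ → K}
    (hdist : ∀ N b, ∑ j ∈ range p, μ (N + 1) (p ^ N * j + b) = μ N b)
    (hbdd : ∀ N a, a < p ^ N → ‖μ N a‖ ≤ 1) {f : ℕ → K}
    (hf : ∀ N a b, a ≡ b [MOD p ^ N] → ‖f a - f b‖ ≤ ‖(p : K)‖ ^ N) :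
    CauchySeq fun N => ∑ a ∈ range (p ^ N), f a * μ N a := by
  refine cauchySeq_of_le_geometric _ 1 hpK fun N => ?_
  have hcoarse : ∑ a ∈ range (p ^ N), f a * μ N a =
      ∑ b ∈ range (p ^ N), ∑ j ∈ range p, f b * μ (N + 1) (p ^ N * j + b) := by
    simp only [← mul_sum, hdist]
  have hfine : ∑ a ∈ range (p ^ (N + 1)), f a * μ (N + 1) a =
      ∑ b ∈ range (p ^ N), ∑ j ∈ range p,
        f (p ^ N * j + b) * μ (N + 1) (p ^ N * j + b) := by
    rw [pow_succ, sum_range_mul_eq_sum_sum, sum_comm]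
  rw [one_mul, dist_eq_norm, hcoarse, hfine, ← sum_sub_distrib]
  refine IsUltrametricDist.norm_sum_le_of_forall_le_of_nonneg (by positivity) fun b hb => ?_
  rw [← sum_sub_distrib]
  refine IsUltrametricDist.norm_sum_le_of_forall_le_of_nonneg (by positivity) fun j hj => ?_
  have hlt : p ^ N * j + b < p ^ (N + 1) := by
    calc p ^ N * j + b < p ^ N * (j + 1) := by rw [mul_add_one]; linarith [mem_range.mp hb]
      _ ≤ p ^ (N + 1) := by rw [pow_succ]; gcongr; exact mem_range.mp hj
  have hmod : b ≡ p ^ N * j + b [MOD p ^ N] := by simp [Nat.ModEq]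
  rw [← sub_mul, norm_mul]
  exact (mul_le_of_le_one_right (norm_nonneg _) (hbdd _ _ hlt)).trans (hf N _ _ hmod)

end Distribution

section Measure

variable {K : Type*} [NormedField K] [CharZero K]

/-- `μ_{k,z}(a + p^N ℤ_p)`. -/
noncomputable def twistedBernoulliMeasure (p k : ℕ) (z : K) (N a : ℕ) : K :=
  (p : K) ^ (N * (k - 1)) * z ^ a * twistedBernoulli k ((a : K) / (p : K) ^ N) (z ^ p ^ N)

variable {p : ℕ} {z : K}

theorem twistedBernoulliMeasure_one (N a : ℕ) :
    twistedBernoulliMeasure p 1 z N a =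
      z ^ a * twistedBernoulli 1 ((a : K) / (p : K) ^ N) (z ^ p ^ N) := by
  simp [twistedBernoulliMeasure]

theorem twistedBernoulliMeasure_one_eq {N : ℕ} (h : z ^ p ^ N ≠ 1) (a : ℕ) :
    twistedBernoulliMeasure p 1 z N a = z ^ a * (z ^ p ^ N - 1)⁻¹ := by
  rw [twistedBernoulliMeasure_one, twistedBernoulli_one h]

theorem sum_twistedBernoulliMeasure_one {N : ℕ} (h : z ^ p ^ (N + 1) ≠ 1) (b : ℕ) :
    ∑ j ∈ range p, twistedBernoulliMeasure p 1 z (N + 1) (p ^ N * j + b) =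
      twistedBernoulliMeasure p 1 z N b := by
  have hpow : (z ^ p ^ N) ^ p = z ^ p ^ (N + 1) := by rw [← pow_mul, ← pow_succ]
  have hN : z ^ p ^ N ≠ 1 := fun h1 => h (by rw [← hpow, h1, one_pow])
  have hgeom := geom_sum_eq hN p
  rw [hpow] at hgeom
  have hterm : ∀ j, z ^ (p ^ N * j + b) = (z ^ p ^ N) ^ j * z ^ b := fun j => by
    rw [pow_add, pow_mul]
  simp only [twistedBernoulliMeasure_one_eq h, twistedBernoulliMeasure_one_eq hN, hterm,
    ← sum_mul, hgeom]
  have : z ^ p ^ (N + 1) - 1 ≠ 0 := sub_ne_zero.mpr h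
  field_simp

variable [IsUltrametricDist K] (hp : p.Prime) (hpK : ‖(p : K)‖ < 1) (hz : 1 ≤ ‖z - 1‖)
include hp hpK hz

theorem norm_twistedBernoulliMeasure_one_le {N a : ℕ} (ha : a ≤ p ^ N) :
    ‖twistedBernoulliMeasure p 1 z N a‖ ≤ 1 := by
  rw [twistedBernoulliMeasure_one_eq (pow_prime_pow_ne_one hp hpK hz N), norm_mul, norm_inv,
    ← div_eq_mul_inv]
  exact div_le_one_of_le₀ (norm_pow_le_norm_pow_prime_pow_sub_one hp hpK hz ha) (norm_nonneg _)

theorem norm_twistedBernoulliMeasure_succ_sub_le (k : ℕ) {N a : ℕ} (ha : a ≤ p ^ N) :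
    ‖twistedBernoulliMeasure p (k + 1) z N a -
        ((k : K) + 1) * (a : K) ^ k * twistedBernoulliMeasure p 1 z N a‖ ≤
      ‖(p : K)‖ ^ N := by
  have hP : (p : K) ^ N ≠ 0 := pow_ne_zero N (Nat.cast_ne_zero.mpr hp.ne_zero)
  have hy := one_le_norm_pow_prime_pow_sub_one hp hpK hz N
  have hdiff : twistedBernoulliMeasure p (k + 1) z N a -
      ((k : K) + 1) * (a : K) ^ k * twistedBernoulliMeasure p 1 z N a =
      z ^ a * (((p : K) ^ N) ^ k * twistedBernoulli (k + 1) ((a : K) / (p : K) ^ N) (z ^ p ^ N) -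
        ((k : K) + 1) * (a : K) ^ k * (z ^ p ^ N - 1)⁻¹) := by
    rw [twistedBernoulliMeasure_one_eq (pow_prime_pow_ne_one hp hpK hz N), twistedBernoulliMeasure,
      Nat.add_sub_cancel, pow_mul]
    ring
  rw [hdiff, norm_mul]
  calc _ ≤ ‖z ^ p ^ N - 1‖ * (‖(p : K) ^ N‖ * ‖z ^ p ^ N - 1‖⁻¹) := by
        gcongr
        · exact norm_pow_le_norm_pow_prime_pow_sub_one hp hpK hz ha
        · exact norm_pow_mul_twistedBernoulli_succ_div_sub_le hP
            (by rw [norm_pow]; exact pow_le_one₀ (norm_nonneg _) hpK.le)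
            (IsUltrametricDist.norm_natCast_le_one K a) hy k
    _ = ‖(p : K)‖ ^ N := by
        rw [mul_left_comm, mul_inv_cancel₀ (by positivity), mul_one, norm_pow]

end Measure

section Integral

variable {K : Type*} [NormedField K] [IsUltrametricDist K] [CharZero K] {p : ℕ} {z : K}
  (hp : p.Prime) (hpK : ‖(p : K)‖ < 1) (hz : 1 ≤ ‖z - 1‖)
include hp hpK hz

theorem exists_tendsto_sum_mul_twistedBernoulliMeasure_one [CompleteSpace K] {f : ℕ → K}
    (hf : ∀ N a b, a ≡ b [MOD p ^ N] → ‖f a - f b‖ ≤ ‖(p : K)‖ ^ N) :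
    ∃ L, Tendsto (fun N => ∑ a ∈ range (p ^ N), f a * twistedBernoulliMeasure p 1 z N a)
      atTop (𝓝 L) :=
  cauchySeq_tendsto_of_complete <| cauchySeq_sum_mul_of_distribution hpK
    (fun N => sum_twistedBernoulliMeasure_one (pow_prime_pow_ne_one hp hpK hz (N + 1)))
    (fun _ _ ha => norm_twistedBernoulliMeasure_one_le hp hpK hz ha.le) hf

theorem tendsto_sum_pow_mul_twistedBernoulliMeasure {k : ℕ} (hk : 1 ≤ k) (r : ℕ)
    {s : ℕ → Finset ℕ} (hs : ∀ N, s N ⊆ range (p ^ N)) {L : K}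
    (hL : Tendsto (fun N => ∑ a ∈ s N, (a : K) ^ (r + k - 1) * twistedBernoulliMeasure p 1 z N a)
      atTop (𝓝 L)) :
    Tendsto (fun N => ∑ a ∈ s N, (a : K) ^ r * twistedBernoulliMeasure p k z N a)
      atTop (𝓝 (k * L)) := by
  obtain ⟨k, rfl⟩ := Nat.exists_eq_add_of_le' hk
  refine (hL.const_mul _).congr_dist (squeeze_zero (fun _ => dist_nonneg) (fun N => ?_)
    (tendsto_pow_atTop_nhds_zero_of_lt_one (norm_nonneg _) hpK))
  rw [dist_comm, dist_eq_norm, mul_sum, ← sum_sub_distrib]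
  refine IsUltrametricDist.norm_sum_le_of_forall_le_of_nonneg (by positivity) fun a ha => ?_
  have hpow : (a : K) ^ (r + (k + 1) - 1) = (a : K) ^ r * (a : K) ^ k := by
    rw [← add_assoc, Nat.add_sub_cancel, pow_add]
  calc _ = ‖(a : K) ^ r‖ * ‖twistedBernoulliMeasure p (k + 1) z N a -
        ((k : K) + 1) * (a : K) ^ k * twistedBernoulliMeasure p 1 z N a‖ := by
        rw [hpow, ← norm_mul]
        congr 1
        push_cast
        ring
    _ ≤ 1 * ‖(p : K)‖ ^ N := by
        gcongr
        · exact_mod_cast IsUltrametricDist.norm_natCast_le_one K (a ^ r)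
        · exact norm_twistedBernoulliMeasure_succ_sub_le hp hpK hz k
            (mem_range.mp (hs N ha)).le
    _ = ‖(p : K)‖ ^ N := one_mul _

end Integral

/-- `∫_{ℤ_p} x^r dμ_{k,z} = k·∫_{ℤ_p} x^{r+k−1} dμ_{1,z}`, and likewise over `ℤ_p^*`:
both integrals (limits of Riemann sums) exist and agree. -/
theorem integral_pow_twistedBernoulli_measure_index_shift
    {K : Type*} [NormedField K] [IsUltrametricDist K] [CharZero K] [CompleteSpace K]
    (p : ℕ) (hp : p.Prime) (hnorm : ‖(p : K)‖ = (p : ℝ)⁻¹)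
    (k : ℕ) (hk : 1 ≤ k) (r : ℕ) (z : K) (hz : 1 ≤ ‖z - 1‖) :
    (∃ L : K,
      Tendsto (fun N : ℕ =>
          ∑ a ∈ Finset.range (p ^ N),
            (a : K) ^ r * ((p : K) ^ (N * (k - 1)) * z ^ a *
              twistedBernoulli k ((a : K) / (p : K) ^ N) (z ^ (p ^ N))))
        atTop (nhds L) ∧
      Tendsto (fun N : ℕ =>
          (k : K) * ∑ a ∈ Finset.range (p ^ N),
            (a : K) ^ (r + k - 1) * (z ^ a *
              twistedBernoulli 1 ((a : K) / (p : K) ^ N) (z ^ (p ^ N))))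
        atTop (nhds L)) ∧
    (∃ L : K,
      Tendsto (fun N : ℕ =>
          ∑ a ∈ (Finset.range (p ^ N)).filter (fun a => ¬ p ∣ a),
            (a : K) ^ r * ((p : K) ^ (N * (k - 1)) * z ^ a *
              twistedBernoulli k ((a : K) / (p : K) ^ N) (z ^ (p ^ N))))
        atTop (nhds L) ∧
      Tendsto (fun N : ℕ =>
          (k : K) * ∑ a ∈ (Finset.range (p ^ N)).filter (fun a => ¬ p ∣ a),
            (a : K) ^ (r + k - 1) * (z ^ a *
              twistedBernoulli 1 ((a : K) / (p : K) ^ N) (z ^ (p ^ N))))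
        atTop (nhds L)) := by
  have hpK : ‖(p : K)‖ < 1 := hnorm ▸ inv_lt_one_of_one_lt₀ (by exact_mod_cast hp.one_lt)
  have shift : ∀ s : ℕ → Finset ℕ, (∀ N, s N ⊆ range (p ^ N)) →
      (∃ L, Tendsto (fun N => ∑ a ∈ s N, (a : K) ^ (r + k - 1) * twistedBernoulliMeasure p 1 z N a)
        atTop (𝓝 L)) →
      ∃ L, Tendsto (fun N => ∑ a ∈ s N, (a : K) ^ r * twistedBernoulliMeasure p k z N a)
          atTop (𝓝 L) ∧
        Tendsto (fun N => (k : K) * ∑ a ∈ s N, (a : K) ^ (r + k - 1) *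
          (z ^ a * twistedBernoulli 1 ((a : K) / (p : K) ^ N) (z ^ p ^ N))) atTop (𝓝 L) := by
    rintro s hs ⟨L, hL⟩
    refine ⟨k * L, tendsto_sum_pow_mul_twistedBernoulliMeasure hp hpK hz hk r hs hL, ?_⟩
    simpa only [twistedBernoulliMeasure_one] using hL.const_mul (k : K)
  refine ⟨shift _ (fun _ => subset_rfl) ?_, shift _ (fun _ => filter_subset _ _) ?_⟩
  · exact exists_tendsto_sum_mul_twistedBernoulliMeasure_one hp hpK hz fun N a b h => by
      simpa only [Nat.cast_pow, norm_pow] using norm_natCast_pow_sub_pow_le_of_modEq (K := K) h _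
  · obtain ⟨L, hL⟩ := exists_tendsto_sum_mul_twistedBernoulliMeasure_one hp hpK hz
      (f := fun a => if p ∣ a then 0 else (a : K) ^ (r + k - 1))
      fun N a b h => norm_ite_dvd_sub_ite_dvd_le_of_modEq h _
    refine ⟨L, hL.congr fun N => ?_⟩
    simp only [sum_filter, ite_not, ite_mul, zero_mul]
end

section
/- Let z ∈ ℂ_p \ {0} with |z−1|_p ≥ 1 and |z^{-1}−1|_p ≥ 1. For k ≥ 2, ∫_{ℤ_p} 1 dμ_{k,1/z} = (−1)^k ∫_{ℤ_p} 1 dμ_{k,z}; and for k = 1, ∫_{ℤ_p} 1 dμ_{1,1/z} = −1 − ∫_{ℤ_p} 1 dμ_{1,z}. Equivalently: β_k(1/z) = (−1)^k β_k(z) for k ≥ 2, and β_1(1/z) = −1 − β_1(z). -/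
namespace PowerSeries

variable {K : Type*} [Field K]

theorem constantCoeff_rescale {R : Type*} [CommSemiring R] (a : R) (φ : R⟦X⟧) :
    constantCoeff (rescale a φ) = constantCoeff φ := by
  rw [← coeff_zero_eq_constantCoeff_apply, coeff_rescale, pow_zero, one_mul,
    coeff_zero_eq_constantCoeff_apply]

theorem rescale_C {R : Type*} [CommSemiring R] (a r : R) : rescale a (C r) = C r := by
  ext n
  rcases eq_or_ne n 0 with rfl | hn <;> simp [coeff_rescale, coeff_C, *]

theorem rescale_inv (a : K) (φ : K⟦X⟧) : rescale a φ⁻¹ = (rescale a φ)⁻¹ := by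
  by_cases hφ : constantCoeff φ = 0
  · rw [inv_eq_zero.mpr hφ, inv_eq_zero.mpr (by rwa [constantCoeff_rescale]), map_zero]
  · rw [eq_inv_iff_mul_eq_one (by rwa [constantCoeff_rescale]), ← map_mul,
      PowerSeries.inv_mul_cancel φ hφ, map_one]

theorem inv_C_inv_mul_exp_sub_one [Algebra ℚ K] {z : K} (hz0 : z ≠ 0) (hz1 : z ≠ 1) :
    (C z⁻¹ * exp K - 1)⁻¹ = -1 - rescale (-1) (C z * exp K - 1)⁻¹ := by
  set E' := rescale (-1 : K) (exp K)
  set B' := C z * E' - 1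
  have hexp : exp K * E' = 1 := exp_mul_exp_neg_eq_one
  have hC : C z⁻¹ * C z = 1 := by rw [← map_mul, inv_mul_cancel₀ hz0, map_one]
  have hB' : B'⁻¹ * B' = 1 :=
    PowerSeries.inv_mul_cancel _ (by simp [B', E', constantCoeff_rescale, sub_ne_zero.mpr hz1])
  rw [rescale_inv, map_sub, map_mul, rescale_C, map_one, inv_eq_iff_mul_eq_one (by simp
    [sub_ne_zero.mpr (inv_ne_one.mpr hz1)])]
  -- `z⁻¹ eᵗ - 1 = -z⁻¹ eᵗ (z e⁻ᵗ - 1)`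
  linear_combination (C z⁻¹ * exp K) * hB' - (B'⁻¹ * exp K * E') * hC - B'⁻¹ * hexp

end PowerSeries

open PowerSeries

theorem twistedBernoulli_zero_left {K : Type*} [Field K] [CharZero K] (k : ℕ) (y : K) :
    twistedBernoulli k 0 y = k.factorial * coeff k (X * (C y * exp K - 1)⁻¹) := by
  simp [twistedBernoulli, constantCoeff_exp]

theorem twistedBernoulli_zero_inv {K : Type*} [Field K] [CharZero K] {z : K} (hz0 : z ≠ 0)
    (hz1 : z ≠ 1) (k : ℕ) :
    twistedBernoulli k 0 z⁻¹ = (-1) ^ k * twistedBernoulli k 0 z - if k = 1 then 1 else 0 := by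
  have hX : X * (C z⁻¹ * exp K - 1)⁻¹ = rescale (-1) (X * (C z * exp K - 1)⁻¹) - X := by
    rw [inv_C_inv_mul_exp_sub_one hz0 hz1, map_mul, rescale_neg_one_X]
    ring
  rw [twistedBernoulli_zero_left, twistedBernoulli_zero_left, hX, map_sub, coeff_rescale,
    coeff_X]
  split_ifs with hk
  · subst hk; simp
  · ring

theorem twistedBernoulli_number_inv_general
    {K : Type*} [NormedField K] [CharZero K]
    (z : K) (hz0 : z ≠ 0) (hz : 1 ≤ ‖z - 1‖) :
    (∀ k : ℕ, 2 ≤ k →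
      twistedBernoulli k 0 z⁻¹ = (-1 : K) ^ k * twistedBernoulli k 0 z) ∧
    twistedBernoulli 1 0 z⁻¹ = -1 - twistedBernoulli 1 0 z := by
  have hz1 : z ≠ 1 := by
    rintro rfl
    norm_num at hz
  refine ⟨fun k hk => ?_, ?_⟩
  · rw [twistedBernoulli_zero_inv hz0 hz1, if_neg (by omega), sub_zero]
  · rw [twistedBernoulli_zero_inv hz0 hz1, if_pos rfl]
    ring

/-- For `z ≠ 0` with `|z−1| ≥ 1` and `|z⁻¹−1| ≥ 1`:
`∫_{ℤ_p} 1 dμ_{k,1/z} = (−1)^k ∫_{ℤ_p} 1 dμ_{k,z}` for `k ≥ 2`, and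
`∫_{ℤ_p} 1 dμ_{1,1/z} = −1 − ∫_{ℤ_p} 1 dμ_{1,z}`; equivalently,
`β_k(1/z) = (−1)^k β_k(z)` for `k ≥ 2` and `β_1(1/z) = −1 − β_1(z)`. -/
theorem twistedBernoulli_number_inv
    {K : Type*} [NormedField K] [IsUltrametricDist K] [CharZero K]
    (p : ℕ) (hp : p.Prime) (hnorm : ‖(p : K)‖ = (p : ℝ)⁻¹)
    (z : K) (hz0 : z ≠ 0) (hz : 1 ≤ ‖z - 1‖) (hzinv : 1 ≤ ‖z⁻¹ - 1‖) :
    (∀ k : ℕ, 2 ≤ k →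
      twistedBernoulli k 0 z⁻¹ = (-1 : K) ^ k * twistedBernoulli k 0 z) ∧
    twistedBernoulli 1 0 z⁻¹ = -1 - twistedBernoulli 1 0 z :=
  twistedBernoulli_number_inv_general z hz0 hz
end
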